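/- arXiv:2601.05007 — 9 statements merged into one kernel-verified Lean document; each statement's English description precedes it below -/
import Mathlib

section
/- Let K ⊆ ℤ^n be a nonempty set invariant under translation by 𝟙_n and closed under coordinatewise min and max (i.e., x, y ∈ K implies x ∧ y ∈ K and x ∨ y ∈ K). Then K = { x ∈ ℤ^n : x_i - x_j ≤ c_{ij} for all i,j } where c_{ij} := sup_{q ∈ K} (q_i - q_j) ∈ ℤ ∪ {∞}. -/
/-!
Given `x` satisfying all the difference constraints, for every pair `i, j` some `q ∈ K` has
`x i - x j ≤ q i - q j` (the bounds `c i j` are suprema of integers, hence attained).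
Translating `q` along `𝟙` so that it agrees with `x` at `i` gives a point of `K` that is
`≤ x` at `j`; the meet over `j` of these is a point of `K` below `x` touching it at `i`,
and the join over `i` of those points is `x` itself.
-/

open Finset

theorem add_zsmul_mem_iff {G : Type*} [AddGroup G] {S : Set G} {v : G}
    (hS : ∀ x, x ∈ S ↔ x + v ∈ S) (x : G) (k : ℤ) : x + k • v ∈ S ↔ x ∈ S := by
  induction k using Int.induction_on with
  | zero => simp
  | succ k ih => rw [add_one_zsmul, ← add_assoc, ← hS, ih]
  | pred k ih => rw [← ih, hS, add_assoc, ← add_one_zsmul, sub_add_cancel]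

theorem exists_le_of_coe_le_isLUB {α : Type*} {f : α → ℤ} {s : Set α} {c : WithTop ℤ}
    (h : IsLUB ((fun q => (f q : WithTop ℤ)) '' s) c) {a : ℤ} (ha : (a : WithTop ℤ) ≤ c) :
    ∃ q ∈ s, a ≤ f q := by
  have hlt : ((a - 1 : ℤ) : WithTop ℤ) < c :=
    lt_of_lt_of_le (WithTop.coe_lt_coe.2 (sub_one_lt a)) ha
  obtain ⟨_, ⟨q, hq, rfl⟩, hq_gt, -⟩ := h.exists_between hlt
  exact ⟨q, hq, Int.sub_one_lt_iff.1 (WithTop.coe_lt_coe.1 hq_gt)⟩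

section Pi

variable {ι β : Type*} [Fintype ι] {K : Set (ι → β)} {x : ι → β}

theorem InfClosed.exists_le_apply_eq [SemilatticeInf β] (hK : InfClosed K) (i : ι)
    (h : ∀ j, ∃ w ∈ K, w i = x i ∧ w j ≤ x j) : ∃ z ∈ K, z ≤ x ∧ z i = x i := by
  choose w hwK hwi hwj using h
  have hne : (univ : Finset ι).Nonempty := ⟨i, mem_univ i⟩
  refine ⟨univ.inf' hne w, hK.finsetInf'_mem hne fun j _ => hwK j, fun j => ?_, ?_⟩
  · exact (Finset.inf'_le w (mem_univ j) j).trans (hwj j)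
  · refine le_antisymm ((Finset.inf'_le w (mem_univ i) i).trans (hwi i).le) ?_
    rw [Finset.inf'_apply]
    exact Finset.le_inf' _ _ fun j _ => (hwi j).ge

theorem SupClosed.mem_of_forall_exists_le_apply_eq [SemilatticeSup β] (hK : SupClosed K)
    (hne : K.Nonempty) (h : ∀ i, ∃ z ∈ K, z ≤ x ∧ z i = x i) : x ∈ K := by
  rcases isEmpty_or_nonempty ι with hι | hι
  · obtain ⟨q, hq⟩ := hne
    rwa [Subsingleton.elim x q]
  choose z hzK hzx hzi using h
  have huniv : (univ : Finset ι).Nonempty := univ_nonempty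
  have hx : x = univ.sup' huniv z := by
    refine le_antisymm (fun i => ?_) (Finset.sup'_le _ _ fun i _ => hzx i)
    rw [Finset.sup'_apply, ← hzi i]
    exact Finset.le_sup' (fun k => z k i) (mem_univ i)
  rw [hx]
  exact hK.finsetSup'_mem huniv fun i _ => hzK i

end Pi

/-- A nonempty subset of ℤ^n which is invariant under translation by the all-ones
vector and closed under coordinatewise min and max equals the set of points obeying
the difference constraints x_i - x_j ≤ c_{ij}, where c_{ij} = sup_{q ∈ K} (q_i - q_j)
in ℤ ∪ {∞}. -/
theorem stmt5 (n : ℕ) (K : Set (Fin n → ℤ)) (hne : K.Nonempty)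
    (htrans : ∀ x : Fin n → ℤ, x ∈ K ↔ x + (fun _ => 1) ∈ K)
    (hinf : ∀ x ∈ K, ∀ y ∈ K, x ⊓ y ∈ K)
    (hsup : ∀ x ∈ K, ∀ y ∈ K, x ⊔ y ∈ K)
    (c : Fin n → Fin n → WithTop ℤ)
    (hc : ∀ i j : Fin n,
      IsLUB ((fun q : Fin n → ℤ => ((q i - q j : ℤ) : WithTop ℤ)) '' K) (c i j)) :
    K = {x | ∀ i j : Fin n, ((x i - x j : ℤ) : WithTop ℤ) ≤ c i j} := by
  have htrans_const (q : Fin n → ℤ) (hq : q ∈ K) (k : ℤ) : q + (fun _ => k) ∈ K := by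
    convert (add_zsmul_mem_iff htrans q k).2 hq using 2
    ext
    simp
  ext x
  refine ⟨fun hx i j => (hc i j).1 ⟨x, hx, rfl⟩, fun hx => ?_⟩
  refine SupClosed.mem_of_forall_exists_le_apply_eq (fun _ ha _ hb => hsup _ ha _ hb) hne
    fun i => InfClosed.exists_le_apply_eq (fun _ ha _ hb => hinf _ ha _ hb) i fun j => ?_
  obtain ⟨q, hq, hxq⟩ := exists_le_of_coe_le_isLUB (hc i j) (hx i j)
  refine ⟨q + fun _ => x i - q i, htrans_const q hq _, by simp, ?_⟩
  simp only [Pi.add_apply]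
  linarith
end

section
/- Let K ⊆ ℤ^n satisfy K + 𝟙_n = K, and suppose that for all x, y ∈ K both ⌊(x+y)/2⌋ and ⌈(x+y)/2⌉ (coordinatewise rounding) lie in K. Then for any x, y ∈ K, the entire set Π(x,y) is contained in K. -/
def PiSet {n : ℕ} (x y : Fin n → ℤ) : Set (Fin n → ℤ) :=
  {z | ∀ i j : Fin n, i < j →
    min (x i - x j) (y i - y j) ≤ z i - z j ∧ z i - z j ≤ max (x i - x j) (y i - y j)}

/-! Translating by constants and taking rounded midpoints, one reaches `p + ⌊(q - p + t) / 2 ^ k⌋`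
for every `t` and `k`; with `2 ^ k` larger than `q - p` this moves `p` by one unit towards `q`
exactly on the coordinates where `p < q` (or `p > q`), so iterating gives `p ⊔ q` and `p ⊓ q`.
A point `z` of `Π(x, y)` is then the join over `j` of the meets of the translates of `x` and `y`
that agree with `z` in coordinate `j`. -/

/-- L-convex sets in the sense of Murota; `-(-a / 2)` is `⌈a / 2⌉`. -/
structure IsLConvex {ι : Type*} (K : Set (ι → ℤ)) : Prop where
  add_one_mem_iff : ∀ x, x ∈ K ↔ (fun i => x i + 1) ∈ K
  floor_mid_mem : ∀ x ∈ K, ∀ y ∈ K, (fun i => (x i + y i) / 2) ∈ K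
  ceil_mid_mem : ∀ x ∈ K, ∀ y ∈ K, (fun i => -(-(x i + y i) / 2)) ∈ K

theorem exists_forall_abs_lt_two_pow {ι : Type*} [Finite ι] (f : ι → ℤ) :
    ∃ k : ℕ, ∀ i, |f i| < 2 ^ k := by
  obtain ⟨B, hB⟩ := Finite.exists_le fun i => |f i|
  obtain ⟨k, hk⟩ := pow_unbounded_of_one_lt B one_lt_two
  exact ⟨k, fun i => (hB i).trans_lt hk⟩

namespace IsLConvex

variable {ι : Type*} {K : Set (ι → ℤ)} {p q : ι → ℤ}

theorem add_const_mem (hK : IsLConvex K) (hp : p ∈ K) (c : ℤ) : (fun i => p i + c) ∈ K := by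
  induction c using Int.induction_on with
  | zero => simpa using hp
  | succ c ih => simpa only [add_assoc] using (hK.add_one_mem_iff _).1 ih
  | pred c ih =>
    exact (hK.add_one_mem_iff _).2 (by simpa only [sub_add_cancel, add_assoc] using ih)

theorem add_add_ediv_two_mem (hK : IsLConvex K) (hp : p ∈ K) (hq : q ∈ K) (t : ℤ) :
    (fun i => (p i + q i + t) / 2) ∈ K := by
  obtain ⟨s, rfl | rfl⟩ := Int.even_or_odd' t
  · convert hK.add_const_mem (hK.floor_mid_mem p hp q hq) s using 2; omega
  · convert hK.add_const_mem (hK.ceil_mid_mem p hp q hq) s using 2; omega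

theorem add_ediv_two_pow_mem (hK : IsLConvex K) (hp : p ∈ K) (hq : q ∈ K) (k : ℕ) (t : ℤ) :
    (fun i => p i + (q i - p i + t) / 2 ^ k) ∈ K := by
  induction k generalizing q t with
  | zero => convert hK.add_const_mem hq t using 2; simp only [pow_zero, Int.ediv_one]; ring
  | succ k ih =>
    -- replace `q` by a rounded midpoint of `p` and `q`; `⌊⌊a / 2⌋ / 2 ^ k⌋ = ⌊a / 2 ^ (k + 1)⌋`
    convert ih (hK.add_add_ediv_two_mem hp hq (t % 2)) (t / 2) using 3 with i
    rw [pow_succ', ← Int.ediv_ediv_of_nonneg zero_le_two]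
    congr 1
    omega

theorem step_up_mem [Finite ι] (hK : IsLConvex K) (hp : p ∈ K) (hq : q ∈ K) :
    (fun i => if p i < q i then p i + 1 else p i) ∈ K := by
  obtain ⟨k, hk⟩ := exists_forall_abs_lt_two_pow (q - p)
  convert hK.add_ediv_two_pow_mem hp hq k (2 ^ k - 1) using 2 with i
  obtain ⟨hlo, hhi⟩ := abs_lt.1 (hk i)
  simp only [Pi.sub_apply] at hlo hhi
  split_ifs with h
  · rw [(Int.ediv_eq_iff_of_pos (y := 1) (by positivity)).2 (by constructor <;> linarith)]
  · rw [Int.ediv_eq_zero_of_lt (by linarith) (by linarith), add_zero]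

theorem step_down_mem [Finite ι] (hK : IsLConvex K) (hp : p ∈ K) (hq : q ∈ K) :
    (fun i => if q i < p i then p i - 1 else p i) ∈ K := by
  obtain ⟨k, hk⟩ := exists_forall_abs_lt_two_pow (q - p)
  convert hK.add_ediv_two_pow_mem hp hq k 0 using 2 with i
  obtain ⟨hlo, hhi⟩ := abs_lt.1 (hk i)
  simp only [Pi.sub_apply] at hlo hhi
  split_ifs with h
  · rw [sub_eq_add_neg,
      (Int.ediv_eq_iff_of_pos (y := -1) (by positivity)).2 (by constructor <;> linarith)]
  · rw [add_zero, Int.ediv_eq_zero_of_lt (by linarith) (by linarith), add_zero]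

theorem sup_mem [Finite ι] (hK : IsLConvex K) (hp : p ∈ K) (hq : q ∈ K) : p ⊔ q ∈ K := by
  have capped : ∀ m : ℕ, (fun i => min (max (p i) (q i)) (p i + m)) ∈ K := by
    intro m
    induction m with
    | zero => convert hp using 2 with i; simp
    | succ m ih =>
      convert hK.step_up_mem ih hq using 2 with i
      push_cast
      split_ifs <;> omega
  obtain ⟨k, hk⟩ := exists_forall_abs_lt_two_pow (q - p)
  convert capped (2 ^ k) using 2 with i
  have := (abs_lt.1 (hk i)).2
  simp only [Pi.sub_apply, Pi.sup_apply] at this ⊢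
  push_cast
  exact (min_eq_left (max_le (le_add_of_nonneg_right (by positivity)) (by linarith))).symm

theorem inf_mem [Finite ι] (hK : IsLConvex K) (hp : p ∈ K) (hq : q ∈ K) : p ⊓ q ∈ K := by
  have capped : ∀ m : ℕ, (fun i => max (min (p i) (q i)) (p i - m)) ∈ K := by
    intro m
    induction m with
    | zero => convert hp using 2 with i; simp
    | succ m ih =>
      convert hK.step_down_mem ih hq using 2 with i
      push_cast
      split_ifs <;> omega
  obtain ⟨k, hk⟩ := exists_forall_abs_lt_two_pow (q - p)
  convert capped (2 ^ k) using 2 with i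
  have := (abs_lt.1 (hk i)).1
  simp only [Pi.sub_apply, Pi.inf_apply] at this ⊢
  push_cast
  exact (max_eq_left (le_min (sub_le_self _ (by positivity)) (by linarith))).symm

end IsLConvex

theorem min_sub_le_of_mem_piSet {n : ℕ} {x y z : Fin n → ℤ} (hz : z ∈ PiSet x y) (i j : Fin n) :
    min (x i - x j) (y i - y j) ≤ z i - z j := by
  rcases lt_trichotomy i j with h | rfl | h
  · exact (hz i j h).1
  · simp
  · have := (hz j i h).2
    omega

theorem eq_sup'_inf_add_const {ι : Type*} [Fintype ι] [Nonempty ι] {x y z : ι → ℤ}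
    (h : ∀ i j, min (x i - x j) (y i - y j) ≤ z i - z j) :
    z = Finset.univ.sup' Finset.univ_nonempty
      fun j => (fun i => x i + (z j - x j)) ⊓ (fun i => y i + (z j - y j)) := by
  ext i
  rw [Finset.sup'_apply]
  refine le_antisymm ?_ (Finset.sup'_le _ _ fun j _ => ?_)
  · exact le_of_eq_of_le (by simp) (Finset.le_sup' _ (Finset.mem_univ i))
  · have := h i j
    simp only [Pi.inf_apply]
    omega

theorem IsLConvex.piSet_subset {n : ℕ} {K : Set (Fin n → ℤ)} (hK : IsLConvex K) {x y : Fin n → ℤ}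
    (hx : x ∈ K) (hy : y ∈ K) : PiSet x y ⊆ K := by
  intro z hz
  cases isEmpty_or_nonempty (Fin n)
  · rwa [Subsingleton.elim z x]
  · rw [eq_sup'_inf_add_const (min_sub_le_of_mem_piSet hz)]
    exact Finset.sup'_induction _ _ (fun _ ha _ hb => hK.sup_mem ha hb)
      fun j _ => hK.inf_mem (hK.add_const_mem hx _) (hK.add_const_mem hy _)

/-- If K + 𝟙 = K and K is closed under coordinatewise floor- and ceiling-averages,
then for any x, y ∈ K we have Π(x,y) ⊆ K.  (Here ⌊a/2⌋ = a / 2 and ⌈a/2⌉ = -((-a)/2)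
using Euclidean division on ℤ.) -/
theorem stmt6 (n : ℕ) (K : Set (Fin n → ℤ))
    (htrans : ∀ x : Fin n → ℤ, x ∈ K ↔ x + (fun _ => 1) ∈ K)
    (hmed : ∀ x ∈ K, ∀ y ∈ K,
      (fun i => (x i + y i) / 2) ∈ K ∧ (fun i => -((-(x i + y i)) / 2)) ∈ K)
    (x y : Fin n → ℤ) (hx : x ∈ K) (hy : y ∈ K) :
    PiSet x y ⊆ K :=
  IsLConvex.piSet_subset ⟨htrans, fun x hx y hy => (hmed x hx y hy).1,
    fun x hx y hy => (hmed x hx y hy).2⟩ hx hy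
end

section
/- For any x, y ∈ ℤ^n, the L-distance L(x, ⌊(x+y)/2⌋) is equal to either ⌊L(x,y)/2⌋ or ⌈L(x,y)/2⌉, where ⌊(x+y)/2⌋ denotes coordinatewise floor-average. -/
def Ldist {n : ℕ} [NeZero n] (x y : Fin n → ℤ) : ℤ :=
  (Finset.univ.sup' Finset.univ_nonempty fun i => x i - y i) -
  (Finset.univ.inf' Finset.univ_nonempty fun i => x i - y i)

/-!
Coordinatewise, `x i - ⌊(x i + y i)/2⌋ = ⌈(x i - y i)/2⌉`, a monotone function of the
difference `x i - y i`. Monotone maps commute with max and min, so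
`L(x, ⌊(x+y)/2⌋) = ⌈M/2⌉ - ⌈m/2⌉` where `M` and `m` are the max and min of `x - y`,
and this is `(M - m)/2` rounded one way or the other.
-/

lemma Int.sub_add_ediv_two (a b : ℤ) : a - (a + b) / 2 = (a - b + 1) / 2 := by omega

lemma Int.add_one_ediv_two_sub_add_one_ediv_two (a b : ℤ) :
    (a + 1) / 2 - (b + 1) / 2 = (a - b) / 2 ∨ (a + 1) / 2 - (b + 1) / 2 = (a - b + 1) / 2 := by
  omega

lemma Ldist_eq_of_sub_eq_apply {n : ℕ} [NeZero n] {x y z : Fin n → ℤ} {g : ℤ → ℤ}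
    (hg : Monotone g) (hz : ∀ i, x i - z i = g (x i - y i)) :
    Ldist x z = g (Finset.univ.sup' Finset.univ_nonempty fun i => x i - y i) -
      g (Finset.univ.inf' Finset.univ_nonempty fun i => x i - y i) := by
  rw [Finset.apply_sup'_eq_sup'_comp _ g hg.map_sup,
    Finset.apply_inf'_eq_inf'_comp _ g hg.map_inf]
  simp only [Ldist, Function.comp_def, hz]

/-- Since `L(x,y) ≥ 0`, `⌊L(x,y)/2⌋` and `⌈L(x,y)/2⌉` are `L(x,y)/2` and `(L(x,y)+1)/2` in
the (Euclidean) division on `ℤ`. -/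
theorem stmt8 (n : ℕ) [NeZero n] (x y : Fin n → ℤ) :
    Ldist x (fun i => (x i + y i) / 2) = Ldist x y / 2 ∨
    Ldist x (fun i => (x i + y i) / 2) = (Ldist x y + 1) / 2 := by
  have hmono : Monotone fun d : ℤ => (d + 1) / 2 :=
    fun _ _ h => Int.ediv_le_ediv two_pos (by omega)
  rw [Ldist_eq_of_sub_eq_apply hmono fun i => Int.sub_add_ediv_two (x i) (y i)]
  exact Int.add_one_ediv_two_sub_add_one_ediv_two _ _
end

section
/- Let x, y ∈ ℤ^n. Then there exist a chain of subsets [n] ⊋ I_1 ⊋ I_2 ⊋ ⋯ ⊋ I_d ⊋ ∅, positive integers ℓ_1, ..., ℓ_d, and c ∈ ℤ, such that y = x + Σ_j ℓ_j e_{I_j} + c·𝟙_n, where e_S = Σ_{i∈S} e_i. Moreover, Π(x,y) = x + [0,ℓ_1]·e_{I_1} + ⋯ + [0,ℓ_d]·e_{I_d} + ℤ·𝟙_n, i.e., Π(x,y) consists exactly of points x + Σ_j a_j e_{I_j} + m·𝟙_n with integers 0 ≤ a_j ≤ ℓ_j and m ∈ ℤ. -/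
private lemma sum_indicator_eq' {d D : ℕ} (hd : d = D - 1) (vv : ℕ → ℤ)
    (hmono : ∀ p q, p < D → q < D → (vv p ≤ vv q ↔ p ≤ q))
    (k : ℕ) (hk : k < D) (F : ℕ → ℤ) :
    (∑ j : Fin d, F j * (if vv (j + 1) ≤ vv k then 1 else 0)) =
      ∑ j ∈ Finset.range k, F j := by
  rw [Fin.sum_univ_eq_sum_range (fun j => F j * (if vv (j + 1) ≤ vv k then 1 else 0))]
  have h1 : ∀ j ∈ Finset.range d,
      F j * (if vv (j+1) ≤ vv k then 1 else 0) = if j < k then F j else 0 := by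
    intro j hj
    rw [Finset.mem_range] at hj
    have hj1 : j + 1 < D := by omega
    by_cases h : j + 1 ≤ k
    · rw [if_pos ((hmono _ _ hj1 hk).mpr h), if_pos (by omega), mul_one]
    · rw [if_neg (fun hc => h ((hmono _ _ hj1 hk).mp hc)), if_neg (by omega), mul_zero]
  rw [Finset.sum_congr rfl h1, ← Finset.sum_filter]
  congr 1
  ext j
  simp only [Finset.mem_filter, Finset.mem_range]
  omega

/-- There is a chain [n] ⊋ I₁ ⊋ ⋯ ⊋ I_d ⊋ ∅, positive integers ℓ_j and c ∈ ℤ with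
y = x + Σ ℓ_j e_{I_j} + c𝟙, and then
Π(x,y) = x + [0,ℓ₁]e_{I₁} + ⋯ + [0,ℓ_d]e_{I_d} + ℤ𝟙. -/
theorem stmt9 (n : ℕ) (x y : Fin n → ℤ) :
    ∃ (d : ℕ) (I : Fin d → Finset (Fin n)) (ℓ : Fin d → ℤ) (c : ℤ),
      (∀ j, (I j).Nonempty) ∧
      (∀ j, I j ≠ Finset.univ) ∧
      (∀ j k : Fin d, j < k → I k ⊂ I j) ∧
      (∀ j, 0 < ℓ j) ∧
      (y = fun i => x i + (∑ j, ℓ j * (if i ∈ I j then 1 else 0)) + c) ∧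
      PiSet x y = {z | ∃ (a : Fin d → ℤ) (m : ℤ),
        (∀ j, 0 ≤ a j ∧ a j ≤ ℓ j) ∧
        z = fun i => x i + (∑ j, a j * (if i ∈ I j then 1 else 0)) + m} := by
  classical
  set w : Fin n → ℤ := fun i => y i - x i with hw
  set V : Finset ℤ := Finset.image w Finset.univ with hV
  set D : ℕ := V.card with hD
  set σ : Fin D ≃o {v // v ∈ V} := V.orderIsoOfFin rfl with hσ
  set vv : ℕ → ℤ := fun k => if h : k < D then (σ ⟨k, h⟩ : ℤ) else 0 with hvv
  -- monotonicity
  have hmono : ∀ p q, p < D → q < D → (vv p ≤ vv q ↔ p ≤ q) := by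
    intro p q hp hq
    simp only [hvv, dif_pos hp, dif_pos hq]
    rw [Subtype.coe_le_coe, OrderIso.le_iff_le, Fin.mk_le_mk]
  have hmem : ∀ p, p < D → vv p ∈ V := by
    intro p hp
    simp only [hvv, dif_pos hp]
    exact (σ ⟨p, hp⟩).2
  have hsurjV : ∀ v ∈ V, ∃ k, k < D ∧ vv k = v := by
    intro v hv
    refine ⟨σ.symm ⟨v, hv⟩, (σ.symm ⟨v, hv⟩).2, ?_⟩
    simp only [hvv, dif_pos (σ.symm ⟨v, hv⟩).2]
    rw [Fin.eta]
    simp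
  have hwV : ∀ i : Fin n, w i ∈ V := fun i => Finset.mem_image_of_mem w (Finset.mem_univ i)
  have hsurj : ∀ i : Fin n, ∃ k, k < D ∧ w i = vv k := by
    intro i
    obtain ⟨k, hk, hkv⟩ := hsurjV (w i) (hwV i)
    exact ⟨k, hk, hkv.symm⟩
  have hexw : ∀ p, p < D → ∃ i, w i = vv p := by
    intro p hp
    obtain ⟨i, _, hi⟩ := Finset.mem_image.mp (hmem p hp)
    exact ⟨i, hi⟩
  set d : ℕ := D - 1 with hdd
  set I : Fin d → Finset (Fin n) :=
    fun j => Finset.univ.filter (fun i => vv (j.1 + 1) ≤ w i) with hI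
  set L : ℕ → ℤ := fun t => vv (t + 1) - vv t with hL
  have hmemI : ∀ (j : Fin d) (i : Fin n), i ∈ I j ↔ vv (j.1 + 1) ≤ w i := by
    intro j i; simp [hI]
  have hjD : ∀ j : Fin d, j.1 + 1 < D := fun j => by have := j.2; omega
  -- characterization of PiSet membership
  have hPi : ∀ z : Fin n → ℤ, z ∈ PiSet x y ↔
      ∀ i j : Fin n, min 0 (w i - w j) ≤ (z i - x i) - (z j - x j) ∧
        (z i - x i) - (z j - x j) ≤ max 0 (w i - w j) := by
    intro z
    constructor
    · intro hz i j
      rcases lt_trichotomy i j with h | h | h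
      · have := hz i j h
        have hy1 : y i - y j = (x i - x j) + (w i - w j) := by simp [hw]; ring
        omega
      · subst h; simp
      · have := hz j i h
        have hy1 : y j - y i = (x j - x i) + (w j - w i) := by simp [hw]; ring
        omega
    · intro hz i j hij
      have := hz i j
      have hy1 : y i - y j = (x i - x j) + (w i - w j) := by simp [hw]; ring
      omega
  refine ⟨d, I, fun j => L j.1, vv 0, ?_, ?_, ?_, ?_, ?_, ?_⟩
  · -- nonempty
    intro j
    obtain ⟨i, hi⟩ := hexw (j.1 + 1) (hjD j)
    exact ⟨i, (hmemI j i).mpr (le_of_eq hi.symm)⟩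
  · -- not univ
    intro j
    have h0 : (0 : ℕ) < D := by have := hjD j; omega
    obtain ⟨i0, hi0⟩ := hexw 0 h0
    intro hcontra
    have : i0 ∈ I j := hcontra ▸ Finset.mem_univ i0
    rw [hmemI] at this
    rw [hi0] at this
    rw [hmono _ _ (hjD j) h0] at this
    omega
  · -- chain
    intro j k hjk
    rw [Fin.lt_def] at hjk
    constructor
    · intro i hi
      rw [hmemI] at hi ⊢
      exact le_trans ((hmono _ _ (hjD j) (hjD k)).mpr (by omega)) hi
    · intro hsub
      obtain ⟨i, hi⟩ := hexw (j.1 + 1) (hjD j)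
      have h1 : i ∈ I j := (hmemI j i).mpr (le_of_eq hi.symm)
      have h2 : i ∈ I k := hsub h1
      rw [hmemI, hi, hmono _ _ (hjD k) (hjD j)] at h2
      omega
  · -- positivity
    intro j
    simp only [hL, sub_pos]
    have h1 : vv j.1 ≤ vv (j.1 + 1) := (hmono _ _ (by have := hjD j; omega) (hjD j)).mpr (by omega)
    have h2 : vv j.1 ≠ vv (j.1 + 1) := by
      intro hcontra
      have := (hmono _ _ (hjD j) (by have := hjD j; omega)).mp (le_of_eq hcontra.symm)
      omega
    omega
  · -- y equation
    funext i
    obtain ⟨k, hk, hik⟩ := hsurj i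
    have hsum : (∑ j : Fin d, L j.1 * (if i ∈ I j then 1 else 0)) =
        ∑ j ∈ Finset.range k, L j := by
      have : ∀ j : Fin d, (L j.1 * (if i ∈ I j then 1 else 0)) =
          L j.1 * (if vv (j.1 + 1) ≤ vv k then 1 else 0) := by
        intro j; simp only [hmemI, hik]
      rw [Finset.sum_congr rfl (fun j _ => this j)]
      exact sum_indicator_eq' hdd vv hmono k hk L
    rw [hsum, hL, Finset.sum_range_sub (fun t => vv t) k]
    have : y i = x i + w i := by simp [hw]
    rw [this, hik]
    ring
  · -- set equality
    ext z
    rw [hPi z]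
    simp only [Set.mem_setOf_eq]
    constructor
    · -- forward
      intro hz
      set u : Fin n → ℤ := fun i => z i - x i with hu
      have hweq : ∀ i i' : Fin n, w i = w i' → u i = u i' := by
        intro i i' h
        have := hz i i'
        rw [h] at this
        simp only [hu]
        omega
      set g : ℕ → ℤ := fun k => if h : ∃ i, w i = vv k then u h.choose else 0 with hg
      have hgval : ∀ (i : Fin n) (k : ℕ), w i = vv k → u i = g k := by
        intro i k hik
        have hex : ∃ i', w i' = vv k := ⟨i, hik⟩
        simp only [hg, dif_pos hex]
        exact hweq i hex.choose (hik.trans hex.choose_spec.symm)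
      refine ⟨fun j => g (j.1 + 1) - g j.1, g 0, ?_, ?_⟩
      · intro j
        obtain ⟨i1, hi1⟩ := hexw j.1 (by have := hjD j; omega)
        obtain ⟨i2, hi2⟩ := hexw (j.1 + 1) (hjD j)
        have hle : w i1 ≤ w i2 := by
          rw [hi1, hi2, hmono _ _ (by have := hjD j; omega) (hjD j)]; omega
        have h1 := hz i1 i2
        have h2 := hz i2 i1
        have e1 : u i1 = g j.1 := hgval i1 j.1 hi1
        have e2 : u i2 = g (j.1 + 1) := hgval i2 (j.1 + 1) hi2
        simp only [hu] at e1 e2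
        simp only [hL]
        constructor
        · omega
        · have : w i2 - w i1 = vv (j.1 + 1) - vv j.1 := by rw [hi1, hi2]
          omega
      · funext i
        obtain ⟨k, hk, hik⟩ := hsurj i
        have hsum : (∑ j : Fin d, (g (j.1 + 1) - g j.1) * (if i ∈ I j then 1 else 0)) =
            ∑ j ∈ Finset.range k, (g (j + 1) - g j) := by
          have : ∀ j : Fin d, ((g (j.1 + 1) - g j.1) * (if i ∈ I j then 1 else 0)) =
              (g (j.1 + 1) - g j.1) * (if vv (j.1 + 1) ≤ vv k then 1 else 0) := by
            intro j; simp only [hmemI, hik]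
          rw [Finset.sum_congr rfl (fun j _ => this j)]
          exact sum_indicator_eq' hdd vv hmono k hk (fun t => g (t + 1) - g t)
        rw [hsum, Finset.sum_range_sub g k]
        have : u i = g k := hgval i k hik
        simp only [hu] at this
        omega
    · -- backward
      rintro ⟨a, m, hab, rfl⟩ i j
      set A : ℕ → ℤ := fun t => if h : t < d then a ⟨t, h⟩ else 0 with hA
      obtain ⟨ki, hki, hiki⟩ := hsurj i
      obtain ⟨kj, hkj, hjkj⟩ := hsurj j
      have hAsum : ∀ (i' : Fin n) (k : ℕ), k < D → w i' = vv k →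
          (∑ t : Fin d, a t * (if i' ∈ I t then 1 else 0)) = ∑ t ∈ Finset.range k, A t := by
        intro i' k hk hik
        have : ∀ t : Fin d, (a t * (if i' ∈ I t then 1 else 0)) =
            A t.1 * (if vv (t.1 + 1) ≤ vv k then 1 else 0) := by
          intro t
          have hAt : A t.1 = a t := by simp [hA, t.2]
          simp only [hmemI, hik, hAt]
        rw [Finset.sum_congr rfl (fun t _ => this t)]
        exact sum_indicator_eq' hdd vv hmono k hk A
      -- key bound: for p ≤ q both < D
      have hbound : ∀ p q : ℕ, p ≤ q → q < D →
          0 ≤ (∑ t ∈ Finset.range q, A t) - (∑ t ∈ Finset.range p, A t) ∧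
          (∑ t ∈ Finset.range q, A t) - (∑ t ∈ Finset.range p, A t) ≤ vv q - vv p := by
        intro p q hpq hq
        rw [← Finset.sum_Ico_eq_sub A hpq]
        have htd : ∀ t ∈ Finset.Ico p q, t < d := by
          intro t ht
          rw [Finset.mem_Ico] at ht
          omega
        constructor
        · apply Finset.sum_nonneg
          intro t ht
          have := htd t ht
          simp only [hA, dif_pos this]
          exact (hab ⟨t, this⟩).1
        · have h1 : (∑ t ∈ Finset.Ico p q, A t) ≤ ∑ t ∈ Finset.Ico p q, L t := by
            apply Finset.sum_le_sum
            intro t ht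
            have := htd t ht
            simp only [hA, dif_pos this, hL]
            exact (hab ⟨t, this⟩).2
          have h2 : (∑ t ∈ Finset.Ico p q, L t) = vv q - vv p := by
            rw [Finset.sum_Ico_eq_sub L hpq]
            simp only [hL]
            rw [Finset.sum_range_sub (fun t => vv t) q, Finset.sum_range_sub (fun t => vv t) p]
            ring
          omega
      have ei := hAsum i ki hki hiki
      have ej := hAsum j kj hkj hjkj
      have hwd : w i - w j = vv ki - vv kj := by rw [hiki, hjkj]
      rcases le_total ki kj with h | h
      · have hb := hbound ki kj h hkj
        have hv : vv ki ≤ vv kj := (hmono _ _ hki hkj).mpr h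
        simp only
        rw [ei, ej] at *
        omega
      · have hb := hbound kj ki h hki
        have hv : vv kj ≤ vv ki := (hmono _ _ hkj hki).mpr h
        simp only
        rw [ei, ej] at *
        omega
end

section
/- Let f : ℤ^n → ℝ ∪ {∞} satisfy f(x + 𝟙_n) = f(x) + r for some constant r, and suppose f(x) + f(y) ≥ f(x ∧ y) + f(x ∨ y) for all x, y. Then f(x) + f(y) ≥ f(⌊(x+y)/2⌋) + f(⌈(x+y)/2⌉) for all x, y ∈ ℤ^n. -/
/-!
The exchange `(x, y) ↦ ((x - 𝟙) ∨ y, x ∧ (y + 𝟙))` preserves `x + y`, and it does not increase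
`f x + f y`: this is submodularity applied to `x` and `y + 𝟙`, after cancelling `r` using
`x ∨ (y + 𝟙) = ((x - 𝟙) ∨ y) + 𝟙`. Coordinatewise it sends `d = xᵢ - yᵢ` to `d - 2` if `d ≥ 1`
and to `-d` otherwise, so iterating it makes every `|xᵢ - yᵢ| ≤ 1`. For such a pair
`⌊(x+y)/2⌋ = x ∧ y` and `⌈(x+y)/2⌉ = x ∨ y`, and submodularity itself is the claim.
-/

section MidpointConvexity

variable {ι M : Type*}

def floorHalf (s : ι → ℤ) : ι → ℤ := fun i => s i / 2

def ceilHalf (s : ι → ℤ) : ι → ℤ := fun i => -(-s i / 2)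

lemma floorHalf_add_eq_inf {x y : ι → ℤ} (h : ∀ i, |x i - y i| ≤ 1) :
    floorHalf (x + y) = x ⊓ y := by
  funext i
  have := abs_le.mp (h i)
  simp only [floorHalf, Pi.add_apply, Pi.inf_apply]
  omega

lemma ceilHalf_add_eq_sup {x y : ι → ℤ} (h : ∀ i, |x i - y i| ≤ 1) :
    ceilHalf (x + y) = x ⊔ y := by
  funext i
  have := abs_le.mp (h i)
  simp only [ceilHalf, Pi.add_apply, Pi.sup_apply]
  omega

lemma sub_one_sup_add_inf_add_one (x y : ι → ℤ) : (x - 1) ⊔ y + x ⊓ (y + 1) = x + y := by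
  funext i
  simp only [Pi.add_apply, Pi.sub_apply, Pi.sup_apply, Pi.inf_apply, Pi.one_apply]
  omega

lemma sub_one_sup_sub_inf_add_one_apply (x y : ι → ℤ) (i : ι) :
    ((x - 1) ⊔ y) i - (x ⊓ (y + 1)) i = if 1 ≤ x i - y i then x i - y i - 2 else y i - x i := by
  simp only [Pi.sub_apply, Pi.add_apply, Pi.sup_apply, Pi.inf_apply, Pi.one_apply]
  split_ifs <;> omega

theorem apply_floorHalf_add_apply_ceilHalf_le_of_abs_sub_le_one [Add M] [LE M]
    {f : (ι → ℤ) → M} (hsub : ∀ x y, f (x ⊓ y) + f (x ⊔ y) ≤ f x + f y) {x y : ι → ℤ}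
    (h : ∀ i, |x i - y i| ≤ 1) :
    f (floorHalf (x + y)) + f (ceilHalf (x + y)) ≤ f x + f y := by
  rw [floorHalf_add_eq_inf h, ceilHalf_add_eq_sup h]
  exact hsub x y

variable [AddCommMonoid M] [PartialOrder M] [IsOrderedAddMonoid M] {f : (ι → ℤ) → M}

theorem apply_sub_one_sup_add_apply_inf_add_one_le {c : M} (hc : AddLECancellable c)
    (htrans : ∀ x, f (x + 1) = f x + c) (hsub : ∀ x y, f (x ⊓ y) + f (x ⊔ y) ≤ f x + f y)
    (x y : ι → ℤ) : f ((x - 1) ⊔ y) + f (x ⊓ (y + 1)) ≤ f x + f y := by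
  have h := hsub x (y + 1)
  rw [show x ⊔ (y + 1) = (x - 1) ⊔ y + 1 by rw [sup_add, sub_add_cancel], htrans, htrans,
    ← add_assoc, ← add_assoc, add_comm (f (x ⊓ _))] at h
  exact hc.add_le_add_iff_right.mp h

theorem apply_floorHalf_add_apply_ceilHalf_le_of_exchange {c : M} (hc : AddLECancellable c)
    (htrans : ∀ x, f (x + 1) = f x + c) (hsub : ∀ x y, f (x ⊓ y) + f (x ⊔ y) ≤ f x + f y)
    {x y : ι → ℤ}
    (h : f (floorHalf ((x - 1) ⊔ y + x ⊓ (y + 1))) + f (ceilHalf ((x - 1) ⊔ y + x ⊓ (y + 1))) ≤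
      f ((x - 1) ⊔ y) + f (x ⊓ (y + 1))) :
    f (floorHalf (x + y)) + f (ceilHalf (x + y)) ≤ f x + f y := by
  rw [sub_one_sup_add_inf_add_one] at h
  exact h.trans (apply_sub_one_sup_add_apply_inf_add_one_le hc htrans hsub x y)

theorem apply_floorHalf_add_apply_ceilHalf_le_of_sub_mem_Icc {c : M} (hc : AddLECancellable c)
    (htrans : ∀ x, f (x + 1) = f x + c) (hsub : ∀ x y, f (x ⊓ y) + f (x ⊔ y) ≤ f x + f y)
    (N : ℕ) {x y : ι → ℤ} (h : ∀ i, x i - y i ∈ Set.Icc (-1 : ℤ) (N + 1)) :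
    f (floorHalf (x + y)) + f (ceilHalf (x + y)) ≤ f x + f y := by
  induction N generalizing x y with
  | zero =>
    refine apply_floorHalf_add_apply_ceilHalf_le_of_abs_sub_le_one hsub fun i => ?_
    have := h i
    simp only [Set.mem_Icc, Nat.cast_zero, zero_add] at this
    exact abs_le.mpr ⟨this.1, this.2⟩
  | succ N ih =>
    refine apply_floorHalf_add_apply_ceilHalf_le_of_exchange hc htrans hsub (ih fun i => ?_)
    have := h i
    simp only [Set.mem_Icc, Nat.cast_add, Nat.cast_one] at this ⊢
    rw [sub_one_sup_sub_inf_add_one_apply]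
    split_ifs <;> omega

theorem apply_floorHalf_add_apply_ceilHalf_le [Finite ι] {c : M} (hc : AddLECancellable c)
    (htrans : ∀ x, f (x + 1) = f x + c) (hsub : ∀ x y, f (x ⊓ y) + f (x ⊔ y) ≤ f x + f y)
    (x y : ι → ℤ) : f (floorHalf (x + y)) + f (ceilHalf (x + y)) ≤ f x + f y := by
  obtain ⟨N, hN⟩ := Finite.exists_le fun i => (x i - y i).natAbs
  refine apply_floorHalf_add_apply_ceilHalf_le_of_exchange hc htrans hsub
    (apply_floorHalf_add_apply_ceilHalf_le_of_sub_mem_Icc hc htrans hsub N fun i => ?_)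
  have := hN i
  rw [sub_one_sup_sub_inf_add_one_apply, Set.mem_Icc]
  split_ifs <;> omega

end MidpointConvexity

/-- If f : ℤ^n → ℝ ∪ {∞} satisfies f(x+𝟙) = f(x) + r and is submodular
(f(x) + f(y) ≥ f(x∧y) + f(x∨y)), then it satisfies discrete midpoint convexity:
f(x) + f(y) ≥ f(⌊(x+y)/2⌋) + f(⌈(x+y)/2⌉). -/
theorem stmt10 (n : ℕ) (f : (Fin n → ℤ) → WithTop ℝ) (r : ℝ)
    (hr : ∀ x : Fin n → ℤ, f (x + fun _ => 1) = f x + (r : WithTop ℝ))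
    (hsub : ∀ x y : Fin n → ℤ, f (x ⊓ y) + f (x ⊔ y) ≤ f x + f y) :
    ∀ x y : Fin n → ℤ,
      f (fun i => (x i + y i) / 2) + f (fun i => -((-(x i + y i)) / 2)) ≤ f x + f y :=
  apply_floorHalf_add_apply_ceilHalf_le (WithTop.addLECancellable_coe r) hr hsub
end

section
/- Let f : ℤ^n → ℝ ∪ {∞} satisfy f(x+𝟙_n) = f(x) + r for some constant r. Suppose the set Finite(f) := {x : f(x) < ∞} is L-convex, and for any x ∈ ℤ^n and subsets I ⊆ J of [n] we have f(x) + f(x + e_I + e_J) ≥ f(x + e_I) + f(x + e_J). Then for any x, y, x', y' ∈ ℤ^n with x + y = x' + y' and x' ∈ Π(x,y), we have f(x) + f(y) ≥ f(x') + f(y'). -/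
/-- Indicator vector of a subset of coordinates. -/
def eVec {n : ℕ} (S : Finset (Fin n)) : Fin n → ℤ := fun i => if i ∈ S then 1 else 0

open Finset

def IsLConvexSet {n : ℕ} (K : Set (Fin n → ℤ)) : Prop :=
  ∀ ⦃x⦄, x ∈ K → ∀ ⦃y⦄, y ∈ K → PiSet x y ⊆ K

def ParallelogramIneq {n : ℕ} (f : (Fin n → ℤ) → WithTop ℝ) : Prop :=
  ∀ (x : Fin n → ℤ) (I J : Finset (Fin n)), I ⊆ J →
    f (x + eVec I) + f (x + eVec J) ≤ f x + f (x + eVec I + eVec J)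

theorem mem_piSet_iff_monovary {n : ℕ} {x y z : Fin n → ℤ} :
    z ∈ PiSet x y ↔ Monovary (z - x) (y - z) := by
  constructor
  · intro hz i j hij
    simp only [Pi.sub_apply] at hij ⊢
    rcases lt_trichotomy i j with h | rfl | h
    · have := hz i j h
      omega
    · rfl
    · have := hz j i h
      omega
  · intro h i j _
    have hij := @h i j
    have hji := @h j i
    simp only [Pi.sub_apply] at hij hji
    omega

theorem IsLConvexSet.add_mem_of_monovary {n : ℕ} {K : Set (Fin n → ℤ)} (hK : IsLConvexSet K)
    {x c z : Fin n → ℤ} (hx : x ∈ K) (hc : x + c ∈ K) (h : Monovary z (c - z)) : x + z ∈ K :=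
  hK hx hc (mem_piSet_iff_monovary.2 (by simpa using h))

theorem Monovary.forall_pos_or_forall_pos {ι : Type*} {a b : ι → ℤ} (ha : 0 ≤ a) (hb : 0 ≤ b)
    (hab : Monovary a b) :
    (∀ i, 0 < a i + b i → 0 < a i) ∨ (∀ i, 0 < a i + b i → 0 < b i) := by
  by_contra! h
  obtain ⟨⟨i, hi, hai⟩, ⟨j, hj, hbj⟩⟩ := h
  have := @hab j i
  have : 0 ≤ a i := ha i
  have : 0 ≤ b j := hb j
  omega

theorem WithTop.add_le_add_of_chain {α : Type*} [AddCommMonoid α] [PartialOrder α]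
    [IsOrderedCancelAddMonoid α] {u v w t p z : WithTop α}
    (h₁ : u + v ≤ w + t) (h₂ : p + t ≤ u + z) (hut : w ≠ ⊤ → z ≠ ⊤ → u ≠ ⊤ ∧ t ≠ ⊤) :
    p + v ≤ w + z := by
  by_cases hw : w = ⊤
  · simp [hw]
  by_cases hz : z = ⊤
  · simp [hz]
  obtain ⟨hu, ht⟩ := hut hw hz
  refine WithTop.addLECancellable_of_ne_top (WithTop.add_ne_top.2 ⟨hu, ht⟩) ?_
  calc u + t + (p + v) = (p + t) + (u + v) := by ac_rfl
    _ ≤ (u + z) + (w + t) := add_le_add h₂ h₁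
    _ = u + t + (w + z) := by ac_rfl

theorem apply_add_const_of_apply_add_one {ι : Type*} {f : (ι → ℤ) → WithTop ℝ} {r : ℝ}
    (hr : ∀ x, f (x + fun _ => 1) = f x + (r : WithTop ℝ)) (x : ι → ℤ) (c : ℤ) :
    f (x + fun _ => c) = f x + ((c * r : ℝ) : WithTop ℝ) := by
  induction c using Int.induction_on with
  | zero =>
    rw [Int.cast_zero, zero_mul, WithTop.coe_zero, add_zero]
    exact congrArg f (add_zero x)
  | succ c ih =>
    rw [show (x + fun _ => (c : ℤ) + 1) = (x + fun _ => (c : ℤ)) + fun _ => 1 by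
      funext; simp [add_assoc], hr, ih, add_assoc, ← WithTop.coe_add]
    congr 2
    push_cast
    ring
  | pred c ih =>
    have h := hr (x + fun _ => -(c : ℤ) - 1)
    rw [show ((x + fun _ => -(c : ℤ) - 1) + fun _ => 1) = x + fun _ => -(c : ℤ) by
      funext; simp only [Pi.add_apply]; ring, ih] at h
    refine WithTop.add_right_cancel (WithTop.coe_ne_top (a := r)) ?_
    rw [← h, add_assoc, ← WithTop.coe_add]
    congr 2
    push_cast
    ring

section
variable {n : ℕ} {f : (Fin n → ℤ) → WithTop ℝ}

theorem ParallelogramIneq.le_of_support_subset (hK : IsLConvexSet {x | f x ≠ ⊤})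
    (hpar : ParallelogramIneq f) (C : Finset (Fin n)) (x b : Fin n → ℤ) (hb : 0 ≤ b)
    (hbC : ∀ i ∉ C, b i = 0) :
    f (x + eVec C) + f (x + b) ≤ f x + f (x + eVec C + b) := by
  obtain ⟨k, hk⟩ := Finite.exists_le (fun i => (b i).toNat)
  induction k generalizing x b with
  | zero =>
    obtain rfl : b = 0 := funext fun i => by
      have : 0 ≤ b i := hb i
      have := hk i
      simp only [Pi.zero_apply]; omega
    simp [add_comm]
  | succ k ih =>
    set B := univ.filter (fun i => 0 < b i)
    have hB : ∀ i, eVec B i = if 0 < b i then 1 else 0 := fun i => by simp [eVec, B]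
    have pt : ∀ i, 0 ≤ b i ∧ (eVec C i = 0 → b i = 0) := fun i =>
      ⟨hb i, fun h => hbC i (by simpa [eVec] using h)⟩
    have hBC : B ⊆ C := fun i hi => by
      by_contra hiC
      simp [B, hbC i hiC] at hi
    have h₁ := hpar x B C hBC
    have h₂ := ih (x + eVec B) (b - eVec B)
      (fun i => by have := pt i; simp only [Pi.zero_apply, Pi.sub_apply, hB]; split_ifs <;> omega)
      (fun i hi => by simp [hB, hbC i hi])
      (fun i => by have := hk i; simp only [Pi.sub_apply, hB]; split_ifs <;> omega)
    rw [show x + eVec B + (b - eVec B) = x + b by abel,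
      show x + eVec B + eVec C + (b - eVec B) = x + eVec C + b by abel, add_comm] at h₂
    rw [add_comm]
    refine WithTop.add_le_add_of_chain h₁ h₂ fun hx hz => ?_
    have fin : ∀ z, Monovary z (eVec C + b - z) → f (x + z) ≠ ⊤ := fun _ =>
      hK.add_mem_of_monovary hx (by rwa [← add_assoc])
    rw [add_assoc]
    refine ⟨fin _ fun i j hij => ?_, fin _ fun i j hij => ?_⟩ <;>
    · have hi := pt i
      have hj := pt j
      simp only [Pi.add_apply, Pi.sub_apply, hB] at hij ⊢
      simp only [eVec] at hij hi hj ⊢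
      split_ifs at hij hi hj ⊢ <;> omega

theorem ParallelogramIneq.le_of_monovary_of_nonneg (hK : IsLConvexSet {x | f x ≠ ⊤})
    (hpar : ParallelogramIneq f) (x a b : Fin n → ℤ) (ha : 0 ≤ a) (hb : 0 ≤ b)
    (hab : Monovary a b) :
    f (x + a) + f (x + b) ≤ f x + f (x + a + b) := by
  obtain ⟨k, hk⟩ := Finite.exists_le (fun i => (a i + b i).toNat)
  induction k generalizing x a b with
  | zero =>
    have h0 : ∀ i, a i = 0 ∧ b i = 0 := fun i => by
      have : 0 ≤ a i := ha i
      have : 0 ≤ b i := hb i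
      have := hk i
      omega
    obtain rfl : a = 0 := funext fun i => (h0 i).1
    obtain rfl : b = 0 := funext fun i => (h0 i).2
    simp
  | succ k ih =>
    suffices key : ∀ a b : Fin n → ℤ, 0 ≤ a → 0 ≤ b → Monovary a b →
        (∀ i, (a i + b i).toNat ≤ k + 1) → (∀ i, 0 < a i + b i → 0 < a i) →
        f (x + a) + f (x + b) ≤ f x + f (x + a + b) by
      rcases hab.forall_pos_or_forall_pos ha hb with h | h
      · exact key a b ha hb hab hk h
      · have := key b a hb ha hab.symm (fun i => add_comm (a i) (b i) ▸ hk i)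
          (fun i => add_comm (a i) (b i) ▸ h i)
        rwa [add_comm (f (x + b)), add_right_comm x b a] at this
    intro a b ha hb hab hk hpos
    set B := univ.filter (fun i => 0 < a i + b i)
    have hB : ∀ i, eVec B i = if 0 < a i + b i then 1 else 0 := fun i => by simp [eVec, B]
    have pt : ∀ i, 0 ≤ a i ∧ 0 ≤ b i ∧ (0 < a i + b i → 0 < a i) := fun i =>
      ⟨ha i, hb i, hpos i⟩
    have h₁ := hpar.le_of_support_subset hK B x b hb fun i hi => by
      have := pt i
      simp only [B, mem_filter, mem_univ, true_and] at hi
      omega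
    have h₂ := ih (x + eVec B) (a - eVec B) b
      (fun i => by have := pt i; simp only [Pi.zero_apply, Pi.sub_apply, hB]; split_ifs <;> omega)
      hb
      (fun i j hij => by
        have := pt i; have := pt j; have := @hab i j
        simp only [Pi.sub_apply, hB]; split_ifs <;> omega)
      (fun i => by have := pt i; have := hk i; simp only [Pi.sub_apply, hB]; split_ifs <;> omega)
    rw [show x + eVec B + (a - eVec B) = x + a by abel] at h₂
    refine WithTop.add_le_add_of_chain h₁ h₂ fun hx hz => ?_
    have fin : ∀ z, Monovary z (a + b - z) → f (x + z) ≠ ⊤ := fun _ =>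
      hK.add_mem_of_monovary hx (by rwa [← add_assoc])
    rw [add_assoc]
    refine ⟨fin _ fun i j hij => ?_, fin _ fun i j hij => ?_⟩ <;>
    · have := pt i; have := pt j; have := @hab i j; have := @hab j i
      simp only [Pi.add_apply, Pi.sub_apply, hB] at hij ⊢
      split_ifs at hij ⊢ <;> omega

end

theorem ParallelogramIneq.le_of_monovary {n : ℕ} {f : (Fin n → ℤ) → WithTop ℝ} {r : ℝ}
    (hr : ∀ x, f (x + fun _ => 1) = f x + (r : WithTop ℝ)) (hK : IsLConvexSet {x | f x ≠ ⊤})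
    (hpar : ParallelogramIneq f) (x a b : Fin n → ℤ) (hab : Monovary a b) :
    f (x + a) + f (x + b) ≤ f x + f (x + a + b) := by
  obtain ⟨c, hc⟩ := Finite.exists_ge a
  obtain ⟨d, hd⟩ := Finite.exists_ge b
  set a₀ := a - fun _ => c
  set b₀ := b - fun _ => d
  have key := hpar.le_of_monovary_of_nonneg hK x a₀ b₀
    (fun i => by simpa [a₀] using hc i) (fun i => by simpa [b₀] using hd i)
    (fun i j h => by simpa [a₀] using @hab i j (by simpa [b₀] using h))
  have ha : x + a = (x + a₀) + fun _ => c := by simp only [a₀]; abel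
  have hb : x + b = (x + b₀) + fun _ => d := by simp only [b₀]; abel
  have hab : x + a + b = (x + a₀ + b₀) + fun _ => c + d := by
    ext i; simp only [a₀, b₀, Pi.add_apply, Pi.sub_apply]; ring
  rw [hab, ha, hb, apply_add_const_of_apply_add_one hr, apply_add_const_of_apply_add_one hr,
    apply_add_const_of_apply_add_one hr, add_add_add_comm, ← WithTop.coe_add, ← add_assoc,
    Int.cast_add, add_mul]
  gcongr

/-- Condition (4) ⟹ condition (1) of Theorem 4.2: if f(x+𝟙) = f(x) + r, the finiteness
set of f is L-convex, and f satisfies the parallelogram inequalities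
f(x) + f(x + e_I + e_J) ≥ f(x+e_I) + f(x+e_J) for I ⊆ J, then f is L-convex. -/
theorem stmt11 (n : ℕ) (f : (Fin n → ℤ) → WithTop ℝ) (r : ℝ)
    (hr : ∀ x : Fin n → ℤ, f (x + fun _ => 1) = f x + (r : WithTop ℝ))
    (hfin : ∀ x y : Fin n → ℤ, f x ≠ ⊤ → f y ≠ ⊤ → ∀ z ∈ PiSet x y, f z ≠ ⊤)
    (hpar : ∀ (x : Fin n → ℤ) (I J : Finset (Fin n)), I ⊆ J →
      f (x + eVec I) + f (x + eVec J) ≤ f x + f (x + eVec I + eVec J)) :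
    ∀ x y x' y' : Fin n → ℤ, x + y = x' + y' → x' ∈ PiSet x y →
      f x' + f y' ≤ f x + f y := by
  intro x y x' y' hsum hx'
  have h := ParallelogramIneq.le_of_monovary hr (fun x hx y hy => hfin x y hx hy) hpar
    x (x' - x) (y - x') (mem_piSet_iff_monovary.1 hx')
  rwa [add_sub_cancel, add_sub_cancel, ← add_sub_assoc, hsum, add_sub_cancel_left] at h
end

section
/- Let h : ℤ^{M+N} → ℝ_{≥0} satisfy h(x)h(y) ≤ h(x∧y)h(x∨y) for all x, y ∈ ℤ^{M+N} (log-supermodularity). Define h̄ : ℤ^M → ℝ_{≥0} by h̄(x) = Σ_{y ∈ ℤ^N} h(x,y), assuming all these sums are finite. Then h̄(x)h̄(y) ≤ h̄(x∧y)h̄(x∨y) for all x, y ∈ ℤ^M. -/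
open Filter

/-! Since `Fin.append` commutes with `⊓` and `⊔`, the fibres `h (x, ·)`, `h (y, ·)`,
`h (x ⊓ y, ·)`, `h (x ⊔ y, ·)` satisfy the hypothesis of the Ahlswede–Daykin inequality on `ℤ^N`.
That inequality bounds the products of finite partial sums, and letting the finite sets exhaust
`ℤ^N` passes the bound to the full sums. -/

lemma Fin.append_inf_append {α : Type*} [Lattice α] {m n : ℕ} (x y : Fin m → α)
    (a b : Fin n → α) : Fin.append x a ⊓ Fin.append y b = Fin.append (x ⊓ y) (a ⊓ b) := by
  funext i
  refine Fin.addCases (fun i => ?_) (fun i => ?_) i <;> simp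

lemma Fin.append_sup_append {α : Type*} [Lattice α] {m n : ℕ} (x y : Fin m → α)
    (a b : Fin n → α) : Fin.append x a ⊔ Fin.append y b = Fin.append (x ⊔ y) (a ⊔ b) := by
  funext i
  refine Fin.addCases (fun i => ?_) (fun i => ?_) i <;> simp

/-- A non-summable `f₁` or `f₂` has sum `0`, so only `f₃` and `f₄` need to be summable. -/
theorem four_functions_theorem_tsum {α : Type*} [DistribLattice α] {f₁ f₂ f₃ f₄ : α → ℝ}
    (h₁ : 0 ≤ f₁) (h₂ : 0 ≤ f₂) (h₃ : 0 ≤ f₃) (h₄ : 0 ≤ f₄)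
    (h : ∀ a b, f₁ a * f₂ b ≤ f₃ (a ⊓ b) * f₄ (a ⊔ b)) (hf₃ : Summable f₃)
    (hf₄ : Summable f₄) :
    (∑' a, f₁ a) * ∑' a, f₂ a ≤ (∑' a, f₃ a) * ∑' a, f₄ a := by
  classical
  have partial_sums : ∀ s t : Finset α,
      (∑ a ∈ s, f₁ a) * ∑ a ∈ t, f₂ a ≤ (∑' a, f₃ a) * ∑' a, f₄ a := fun s t =>
    (four_functions_theorem f₁ f₂ f₃ f₄ h₁ h₂ h₃ h₄ h s t).trans <|
      mul_le_mul (hf₃.sum_le_tsum _ fun a _ => h₃ a) (hf₄.sum_le_tsum _ fun a _ => h₄ a)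
        (Finset.sum_nonneg fun a _ => h₄ a) (tsum_nonneg h₃)
  have rhs_nonneg : 0 ≤ (∑' a, f₃ a) * ∑' a, f₄ a :=
    mul_nonneg (tsum_nonneg h₃) (tsum_nonneg h₄)
  by_cases hf₁ : Summable f₁
  swap
  · simpa [tsum_eq_zero_of_not_summable hf₁] using rhs_nonneg
  by_cases hf₂ : Summable f₂
  swap
  · simpa [tsum_eq_zero_of_not_summable hf₂] using rhs_nonneg
  have partial_sums_right : ∀ t : Finset α,
      (∑' a, f₁ a) * ∑ a ∈ t, f₂ a ≤ (∑' a, f₃ a) * ∑' a, f₄ a := fun t =>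
    le_of_tendsto (hf₁.hasSum.mul_const _) (Eventually.of_forall fun s => partial_sums s t)
  exact le_of_tendsto (hf₂.hasSum.const_mul _) (Eventually.of_forall partial_sums_right)

/-- Marginalization of a nonnegative log-supermodular function on ℤ^{M+N} over the
last N coordinates is log-supermodular on ℤ^M (Ahlswede–Daykin). -/
theorem stmt13 (M N : ℕ) (h : (Fin (M + N) → ℤ) → ℝ)
    (hpos : ∀ u, 0 ≤ h u)
    (hlsm : ∀ u v, h u * h v ≤ h (u ⊓ v) * h (u ⊔ v))
    (hsum : ∀ x : Fin M → ℤ, Summable fun y : Fin N → ℤ => h (Fin.append x y))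
    (x y : Fin M → ℤ) :
    (∑' y' : Fin N → ℤ, h (Fin.append x y')) * (∑' y' : Fin N → ℤ, h (Fin.append y y')) ≤
    (∑' y' : Fin N → ℤ, h (Fin.append (x ⊓ y) y')) *
      (∑' y' : Fin N → ℤ, h (Fin.append (x ⊔ y) y')) := by
  refine four_functions_theorem_tsum (fun _ => hpos _) (fun _ => hpos _) (fun _ => hpos _)
    (fun _ => hpos _) (fun a b => ?_) (hsum _) (hsum _)
  simpa only [Fin.append_inf_append, Fin.append_sup_append] using
    hlsm (Fin.append x a) (Fin.append y b)
end

section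
/- Fix π ∈ ℤ^n. Let S_π be the set of pairs (λ, μ) ∈ ℤ^n × ℤ^n with λ + μ = π, preordered by (λ',μ') ⊑ (λ,μ) iff Π(λ',μ') ⊆ Π(λ,μ). Let C_π be the set of δ ∈ ℤ^n with δ ≡ π mod 2 (coordinatewise), preordered by δ' ⪯ δ iff |δ'_i − δ'_j| ≤ |δ_i − δ_j| for all i < j. Then the map (λ,μ) ↦ μ − λ is an order-isomorphism of preorders from S_π to C_π, with inverse δ ↦ ((π−δ)/2, (π+δ)/2). In particular, Π(λ',μ') ⊆ Π(λ,μ) if and only if |(μ'−λ')_i − (μ'−λ')_j| ≤ |(μ−λ)_i − (μ−λ)_j| for all i < j. -/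
open Set
open scoped Interval

section CommonMidpoint

variable {α : Type*} [AddCommGroup α] [LinearOrder α] [IsOrderedAddMonoid α]

theorem uIcc_subset_uIcc_iff_abs_sub_le_of_add_eq {a b c d : α} (h : c + d = a + b) :
    [[c, d]] ⊆ [[a, b]] ↔ |d - c| ≤ |b - a| := by
  rw [uIcc_subset_uIcc_iff_le, ← max_sub_min_eq_abs, ← max_sub_min_eq_abs]
  have hsum : min c d + max c d = min a b + max a b := by rw [min_add_max, min_add_max, h]
  constructor
  · rintro ⟨hmin, hmax⟩
    exact sub_le_sub hmax hmin
  · intro hlen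
    -- as `min + max` is the same for both intervals, each endpoint bound implies the other
    have hmax : max c d ≤ max a b := by
      by_contra! hlt
      have : min c d < min a b := by
        by_contra! hge
        exact absurd hsum (ne_of_gt (add_lt_add_of_le_of_lt hge hlt))
      exact absurd hlen (not_le.2 (sub_lt_sub hlt this))
    refine ⟨?_, hmax⟩
    by_contra! hlt
    exact absurd hsum (ne_of_lt (add_lt_add_of_lt_of_le hlt hmax))

end CommonMidpoint

section PiSet

variable {n : ℕ} {x y x' y' z : Fin n → ℤ}

theorem mem_PiSet_iff :
    z ∈ PiSet x y ↔ ∀ i j, i < j → z i - z j ∈ [[x i - x j, y i - y j]] :=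
  Iff.rfl

theorem left_mem_PiSet : x ∈ PiSet x y :=
  mem_PiSet_iff.2 fun _ _ _ => left_mem_uIcc

theorem right_mem_PiSet : y ∈ PiSet x y :=
  mem_PiSet_iff.2 fun _ _ _ => right_mem_uIcc

theorem PiSet_subset_PiSet_iff :
    PiSet x' y' ⊆ PiSet x y ↔
      ∀ i j, i < j → [[x' i - x' j, y' i - y' j]] ⊆ [[x i - x j, y i - y j]] := by
  constructor
  · intro hsub i j hij
    exact uIcc_subset_uIcc (mem_PiSet_iff.1 (hsub left_mem_PiSet) i j hij)
      (mem_PiSet_iff.1 (hsub right_mem_PiSet) i j hij)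
  · intro hsub z hz
    exact mem_PiSet_iff.2 fun i j hij => hsub i j hij (mem_PiSet_iff.1 hz i j hij)

theorem PiSet_subset_PiSet_iff_abs_sub_le (h : x' + y' = x + y) :
    PiSet x' y' ⊆ PiSet x y ↔
      ∀ i j, i < j → |(y' - x') i - (y' - x') j| ≤ |(y - x) i - (y - x) j| := by
  rw [PiSet_subset_PiSet_iff]
  refine forall₃_congr fun i j _ => ?_
  have hi := congrFun h i
  have hj := congrFun h j
  simp only [Pi.add_apply] at hi hj
  rw [uIcc_subset_uIcc_iff_abs_sub_le_of_add_eq (by linarith)]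
  simp only [Pi.sub_apply, sub_sub_sub_comm]

end PiSet

/-- The map (λ,μ) ↦ μ - λ is an isomorphism of preorders from S_π (pairs summing to π,
ordered by Π-containment) to C_π (vectors ≡ π mod 2, ordered by coordinate gap
comparison), with inverse δ ↦ ((π-δ)/2, (π+δ)/2). -/
theorem stmt17 (n : ℕ) (p lam mu lam' mu' : Fin n → ℤ)
    (h : lam + mu = p) (h' : lam' + mu' = p) :
    (∀ i, (mu - lam) i % 2 = p i % 2) ∧
    ((fun i => (p i - (mu i - lam i)) / 2) = lam) ∧
    ((fun i => (p i + (mu i - lam i)) / 2) = mu) ∧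
    (PiSet lam' mu' ⊆ PiSet lam mu ↔
      ∀ i j : Fin n, i < j →
        |(mu' - lam') i - (mu' - lam') j| ≤ |(mu - lam) i - (mu - lam) j|) := by
  subst h
  refine ⟨fun i => ?_, funext fun i => ?_, funext fun i => ?_,
    PiSet_subset_PiSet_iff_abs_sub_le h'⟩ <;>
  simp only [Pi.add_apply, Pi.sub_apply] <;> omega
end

section
/- Let b < c be integers and λ, μ ∈ ℤ^n. Define λ ⋎_{bc} μ and λ ⋏_{bc} μ coordinatewise by the zig/zag operators. If δ = μ − λ and δ' = (λ ⋏_{bc} μ) − (λ ⋎_{bc} μ), then δ'_i = φ_{bc}(δ_i) for all i, where φ_{bc}(z) = z − 2b for z ≤ b, = −z for b ≤ z ≤ c, and = z − 2c for z ≥ c. Consequently |δ'_i − δ'_j| ≤ |δ_i − δ_j| for all i, j, and hence Π(λ ⋎_{bc} μ, λ ⋏_{bc} μ) ⊆ Π(λ, μ). -/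
def zig (b c x y : ℤ) : ℤ :=
  if y ≤ x + b then x + b else if y ≤ x + c then y else x + c

def zag (b c x y : ℤ) : ℤ :=
  if y ≤ x + b then y - b else if y ≤ x + c then x else y - c

/-- φ_{bc}(z) = z - 2b for z ≤ b, -z for b ≤ z ≤ c, z - 2c for z ≥ c. -/
def phiBC (b c z : ℤ) : ℤ :=
  if z ≤ b then z - 2 * b else if z ≤ c then -z else z - 2 * c

/-- δ' = (λ ⋏ μ) - (λ ⋎ μ) satisfies δ'_i = φ_{bc}(δ_i) where δ = μ - λ; hence
the coordinate gaps of δ' are bounded by those of δ, and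
Π(λ ⋎ μ, λ ⋏ μ) ⊆ Π(λ, μ). -/
theorem stmt18 (n : ℕ) (b c : ℤ) (hbc : b < c) (lam mu : Fin n → ℤ) :
    (∀ i, zag b c (lam i) (mu i) - zig b c (lam i) (mu i) = phiBC b c (mu i - lam i)) ∧
    (∀ i j : Fin n,
      |phiBC b c (mu i - lam i) - phiBC b c (mu j - lam j)| ≤
        |(mu i - lam i) - (mu j - lam j)|) ∧
    PiSet (fun i => zig b c (lam i) (mu i)) (fun i => zag b c (lam i) (mu i)) ⊆
      PiSet lam mu := by
  have key : ∀ i, zag b c (lam i) (mu i) - zig b c (lam i) (mu i) = phiBC b c (mu i - lam i) := by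
    intro i; unfold zag zig phiBC; split_ifs <;> omega
  have sum : ∀ i, zig b c (lam i) (mu i) + zag b c (lam i) (mu i) = lam i + mu i := by
    intro i; unfold zag zig; split_ifs <;> omega
  have lip : ∀ i j : Fin n,
      |phiBC b c (mu i - lam i) - phiBC b c (mu j - lam j)| ≤
        |(mu i - lam i) - (mu j - lam j)| := by
    intro i j
    rcases abs_cases ((mu i - lam i) - (mu j - lam j)) with ⟨h1, h2⟩ | ⟨h1, h2⟩ <;>
      rw [h1] <;> rw [abs_le] <;> unfold phiBC <;> split_ifs <;> omega
  refine ⟨key, lip, ?_⟩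
  intro z hz
  simp only [PiSet, Set.mem_setOf_eq] at hz ⊢
  intro i j hij
  have h1 := hz i j hij
  have hsi := sum i
  have hsj := sum j
  have hki := key i
  have hkj := key j
  have hk := lip i j
  rcases abs_cases (phiBC b c (mu i - lam i) - phiBC b c (mu j - lam j)) with ⟨e1, _⟩ | ⟨e1, _⟩ <;>
    rcases abs_cases ((mu i - lam i) - (mu j - lam j)) with ⟨e2, _⟩ | ⟨e2, _⟩ <;>
      rw [e1, e2] at hk <;> omega
end
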